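/- arXiv:1703.01801 — 4 statements merged into one kernel-verified Lean document; each statement's English description precedes it below -/
import Mathlib

section
/- For every real ε > 0 there exists a natural number p₀ such that for all p ≥ p₀ and all natural numbers n ≥ 1, one has (as real numbers) (1 − ε)·(J(p·n) + 1) ≤ n·J(p) + 1 ≤ J(p·n) + 1. -/
/-- `J n = ∑_{i=0}^∞ ⌊n/2^i⌋`.  Since `⌊n/2^i⌋ = 0` whenever `2^i > n`
(in particular for all `i ≥ n`, as `2^i ≥ i + 1 > n`), the infinite sum
equals the finite sum over `i = 0, …, n`. -/
def J (n : ℕ) : ℕ := ∑ i ∈ Finset.range (n + 1), n / 2 ^ i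

/-!
By Legendre's formula `J n = n + v₂(n!) = 2n - s₂(n)`, where `s₂` is the binary digit sum.
Termwise `n ⌊p/2^i⌋ ≤ ⌊pn/2^i⌋` gives `n J(p) ≤ J(pn)`. Conversely
`J(pn) ≤ 2pn = n (J(p) + s₂(p))`, and `s₂(p) ≤ log₂ p + 1 ≤ ε p` for large `p`, so the defect
`J(pn) - n J(p)` is at most `ε p n ≤ ε J(pn)`.
-/

open Filter Asymptotics Nat

theorem digits_sum_le_mul_log_add_one (b n : ℕ) (hb : 1 < b) :
    (b.digits n).sum ≤ (b - 1) * (log b n + 1) := by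
  rcases eq_or_ne n 0 with rfl | hn
  · simp
  calc (b.digits n).sum ≤ (b.digits n).length • (b - 1) :=
        List.sum_le_card_nsmul _ _ fun d hd => le_sub_one_of_lt (digits_lt_base hb hd)
    _ = (b - 1) * (log b n + 1) := by rw [length_digits b n hb hn, smul_eq_mul, mul_comm]

theorem isLittleO_digits_sum (b : ℕ) (hb : 1 < b) :
    (fun n : ℕ => ((b.digits n).sum : ℝ)) =o[atTop] fun n => (n : ℝ) := by
  have hlog : (fun x : ℝ => (b - 1 : ℝ) * (Real.logb b x + 1)) =o[atTop] id :=
    (Real.isLittleO_logb_id_atTop.add (isLittleO_const_id_atTop 1)).const_mul_left _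
  refine IsBigO.trans_isLittleO ?_ (hlog.comp_tendsto tendsto_natCast_atTop_atTop)
  refine IsBigO.of_bound 1 (Eventually.of_forall fun n => ?_)
  have hdig := digits_sum_le_mul_log_add_one b n hb
  rw [← Nat.cast_le (α := ℝ), Nat.cast_mul, Nat.cast_sub hb.le, Nat.cast_one,
    Nat.cast_succ] at hdig
  have hb1 : (1 : ℝ) ≤ b := mod_cast hb.le
  have hlogb : (log b n : ℝ) ≤ Real.logb b n := Real.natLog_le_logb n b
  have hlog0 : (0 : ℝ) ≤ log b n := Nat.cast_nonneg _
  simp only [Function.comp_apply, Real.norm_eq_abs, one_mul]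
  rw [abs_of_nonneg (by positivity), abs_of_nonneg (by nlinarith)]
  exact hdig.trans (by gcongr)

theorem J_eq_add_padicValNat_factorial (n : ℕ) : J n = n + padicValNat 2 n ! := by
  rw [J, Finset.range_eq_Ico, Finset.sum_eq_sum_Ico_succ_bot n.succ_pos,
    padicValNat_factorial (p := 2) (lt_succ_of_le (log_le_self 2 n)), pow_zero, Nat.div_one]

theorem padicValNat_two_factorial_add_digits_sum (n : ℕ) :
    padicValNat 2 n ! + (Nat.digits 2 n).sum = n := by
  have h := sub_one_mul_padicValNat_factorial (p := 2) n
  have hle := digit_sum_le 2 n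
  norm_num at h
  omega

theorem J_add_digits_sum (n : ℕ) : J n + (Nat.digits 2 n).sum = 2 * n := by
  rw [J_eq_add_padicValNat_factorial, add_assoc, padicValNat_two_factorial_add_digits_sum, two_mul]

theorem self_le_J (n : ℕ) : n ≤ J n := by
  rw [J_eq_add_padicValNat_factorial]
  exact le_add_right le_rfl

theorem J_mul_le (p n : ℕ) : J (p * n) ≤ n * J p + n * (Nat.digits 2 p).sum := by
  have hpn := J_add_digits_sum (p * n)
  have hp := J_add_digits_sum p
  calc J (p * n) ≤ 2 * (p * n) := by omega
    _ = n * J p + n * (Nat.digits 2 p).sum := by rw [← mul_add, hp]; ring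

theorem mul_J_le_J_mul (p n : ℕ) : n * J p ≤ J (p * n) := by
  rcases eq_or_ne n 0 with rfl | hn
  · simp
  rw [J, J, Finset.mul_sum]
  calc ∑ i ∈ Finset.range (p + 1), n * (p / 2 ^ i)
      ≤ ∑ i ∈ Finset.range (p + 1), p * n / 2 ^ i := Finset.sum_le_sum fun i _ =>
        (Nat.mul_div_le_mul_div_assoc n p _).trans_eq (by rw [mul_comm])
    _ ≤ ∑ i ∈ Finset.range (p * n + 1), p * n / 2 ^ i :=
        Finset.sum_le_sum_of_subset (Finset.range_subset_range.mpr
          (Nat.succ_le_succ (Nat.le_mul_of_pos_right p (pos_of_ne_zero hn))))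

/-- For every real `ε > 0` there exists `p₀` such that for all `p ≥ p₀` and all
`n ≥ 1`, one has (as real numbers)
`(1 − ε)·(J(p·n) + 1) ≤ n·J(p) + 1 ≤ J(p·n) + 1`. -/
theorem J_approx (ε : ℝ) (hε : 0 < ε) :
    ∃ p₀ : ℕ, ∀ p ≥ p₀, ∀ n : ℕ, 1 ≤ n →
      (1 - ε) * (J (p * n) + 1 : ℝ) ≤ n * J p + 1 ∧
        (n * J p + 1 : ℝ) ≤ J (p * n) + 1 := by
  obtain ⟨p₀, hp₀⟩ := eventually_atTop.1 ((isLittleO_digits_sum 2 one_lt_two).def hε)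
  refine ⟨p₀, fun p hp n _ => ?_⟩
  have hdigits : ((Nat.digits 2 p).sum : ℝ) ≤ ε * p := by
    simpa only [Real.norm_natCast] using hp₀ p hp
  have hJ_ge : (n * J p : ℝ) ≤ J (p * n) := mod_cast mul_J_le_J_mul p n
  have hJ_le : (J (p * n) : ℝ) ≤ n * J p + n * (Nat.digits 2 p).sum := mod_cast J_mul_le p n
  have hpn : (p * n : ℝ) ≤ J (p * n) := mod_cast self_le_J (p * n)
  have hdefect := mul_le_mul_of_nonneg_left hdigits n.cast_nonneg
  have hscaled := mul_le_mul_of_nonneg_left hpn hε.le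
  constructor <;> linarith
end

section
/- For all natural numbers n and m, if f ∈ B_n and g ∈ B_m then f·g ∈ B_{n+m}; that is, the family (B_n)_{n≥0} of subspaces of ℂ(x) is multiplicative, so B = ⊕_n B_n is a graded algebra. -/
open Polynomial

/-- `P z n = ∏_{i=0}^∞ (x − z_i)^{⌊n/2^i⌋}` in `ℂ[x]`, which equals the finite
product over `i = 0, …, n` since the exponent vanishes whenever `2^i > n`. -/
noncomputable def P (z : ℕ → ℂ) (n : ℕ) : Polynomial ℂ :=
  ∏ i ∈ Finset.range (n + 1), (X - C (z i)) ^ (n / 2 ^ i)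

/-- `B_n = { Q(x)/P_n(x) : Q ∈ ℂ[x], deg Q ≤ J(n) }`, as a subset of the field
of rational functions `ℂ(x)`. -/
noncomputable def B (z : ℕ → ℂ) (n : ℕ) : Set (RatFunc ℂ) :=
  {f | ∃ Q : Polynomial ℂ, Q.natDegree ≤ J n ∧
    f = algebraMap (Polynomial ℂ) (RatFunc ℂ) Q /
        algebraMap (Polynomial ℂ) (RatFunc ℂ) (P z n)}

/-!
Since `⌊n/2^i⌋ + ⌊m/2^i⌋ ≤ ⌊(n+m)/2^i⌋`, the product `P_n P_m` divides `P_{n+m}`, and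
`deg P_n = J n`. Hence `(Q/P_n)(R/P_m) = Q R D / P_{n+m}` where `P_{n+m} = P_n P_m D`, and
`deg (Q R D) ≤ deg P_n + deg P_m + deg D = deg P_{n+m}`.
-/

theorem RatFunc.exists_mul_eq_div_of_mul_dvd {K : Type*} [Field K] {A B C Q R : K[X]}
    (hC : C ≠ 0) (hdvd : A * B ∣ C) (hQ : Q.natDegree ≤ A.natDegree)
    (hR : R.natDegree ≤ B.natDegree) :
    ∃ S : K[X], S.natDegree ≤ C.natDegree ∧
      algebraMap K[X] (RatFunc K) Q / algebraMap K[X] (RatFunc K) A *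
        (algebraMap K[X] (RatFunc K) R / algebraMap K[X] (RatFunc K) B) =
      algebraMap K[X] (RatFunc K) S / algebraMap K[X] (RatFunc K) C := by
  obtain ⟨D, rfl⟩ := hdvd
  have hD : D ≠ 0 := right_ne_zero_of_mul hC
  have hAB : A * B ≠ 0 := left_ne_zero_of_mul hC
  refine ⟨Q * R * D, ?_, ?_⟩
  · rw [natDegree_mul hAB hD, natDegree_mul (left_ne_zero_of_mul hAB) (right_ne_zero_of_mul hAB)]
    calc (Q * R * D).natDegree ≤ Q.natDegree + R.natDegree + D.natDegree :=
          natDegree_mul_le.trans (Nat.add_le_add_right natDegree_mul_le _)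
      _ ≤ A.natDegree + B.natDegree + D.natDegree := by gcongr
  · rw [div_mul_div_comm, ← map_mul, ← map_mul, map_mul _ (A * B), map_mul _ (Q * R),
      mul_div_mul_right _ _ (RatFunc.algebraMap_ne_zero hD)]

lemma P_eq_prod_range (z : ℕ → ℂ) {n N : ℕ} (h : n ≤ N) :
    P z n = ∏ i ∈ Finset.range (N + 1), (X - C (z i)) ^ (n / 2 ^ i) := by
  refine Finset.prod_subset (Finset.range_subset_range.2 (by omega)) fun i _ hi => ?_
  have hni : n < 2 ^ i := (by simp at hi; omega : n < i).trans Nat.lt_two_pow_self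
  rw [Nat.div_eq_of_lt hni, pow_zero]

lemma monic_P (z : ℕ → ℂ) (n : ℕ) : (P z n).Monic :=
  monic_prod_of_monic _ _ fun _ _ => (monic_X_sub_C _).pow _

lemma natDegree_P (z : ℕ → ℂ) (n : ℕ) : (P z n).natDegree = J n := by
  rw [P, natDegree_prod_of_monic _ _ fun _ _ => (monic_X_sub_C _).pow _, J]
  simp only [natDegree_pow, natDegree_X_sub_C, mul_one]

lemma P_mul_P_dvd (z : ℕ → ℂ) (n m : ℕ) : P z n * P z m ∣ P z (n + m) := by
  rw [P_eq_prod_range z (Nat.le_add_right n m), P_eq_prod_range z (Nat.le_add_left m n),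
    ← Finset.prod_mul_distrib, P]
  refine Finset.prod_dvd_prod_of_dvd _ _ fun i _ => ?_
  rw [← pow_add]
  exact pow_dvd_pow _ Nat.div_add_div_le_add_div

theorem B_mul_mem_general (z : ℕ → ℂ) (n m : ℕ)
    (f g : RatFunc ℂ) (hf : f ∈ B z n) (hg : g ∈ B z m) :
    f * g ∈ B z (n + m) := by
  obtain ⟨Q, hQ, rfl⟩ := hf
  obtain ⟨R, hR, rfl⟩ := hg
  rw [← natDegree_P z] at hQ hR
  obtain ⟨S, hS, hfg⟩ := RatFunc.exists_mul_eq_div_of_mul_dvd (monic_P z (n + m)).ne_zero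
    (P_mul_P_dvd z n m) hQ hR
  exact ⟨S, natDegree_P z (n + m) ▸ hS, hfg⟩

/-- For all natural numbers `n` and `m`, if `f ∈ B_n` and `g ∈ B_m` then
`f·g ∈ B_{n+m}`: the family `(B_n)` of subspaces of `ℂ(x)` is multiplicative,
so `B = ⊕_n B_n` is a graded algebra. -/
theorem B_mul_mem (z : ℕ → ℂ) (hz : Function.Injective z) (n m : ℕ)
    (f g : RatFunc ℂ) (hf : f ∈ B z n) (hg : g ∈ B z m) :
    f * g ∈ B z (n + m) :=
  B_mul_mem_general z n m f g hf hg
end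

section
/- For all natural numbers p and n ≥ 1, the ℂ-linear span in ℂ(x) of all n-fold products f₁·f₂⋯f_n with each f_k ∈ B_p equals the subspace { Q(x)/P_p(x)^n : Q ∈ ℂ[x], deg Q ≤ n·J(p) }, and this subspace has dimension n·J(p) + 1. -/
open Polynomial

/-- The set of `n`-fold products `f₁ ⋯ f_n` with each `f_k ∈ B_p`. -/
noncomputable def prodSet (z : ℕ → ℂ) (p n : ℕ) : Set (RatFunc ℂ) :=
  {f | ∃ g : Fin n → RatFunc ℂ, (∀ k, g k ∈ B z p) ∧ f = ∏ k, g k}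

/-- Any `a ≤ n * m` can be written as a sum of `n` naturals each at most `m`. -/
lemma exists_sum_decomp (m : ℕ) : ∀ (n a : ℕ), a ≤ n * m →
    ∃ e : Fin n → ℕ, (∀ k, e k ≤ m) ∧ ∑ k, e k = a := by
  intro n
  induction n with
  | zero =>
    intro a ha
    refine ⟨fun k => 0, fun k => Nat.zero_le _, ?_⟩
    simp at ha ⊢
    omega
  | succ q ih =>
    intro a ha
    obtain ⟨e, he, hs⟩ := ih (a - min a m) (by rw [Nat.succ_mul] at ha; omega)
    refine ⟨Fin.cons (min a m) e, ?_, ?_⟩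
    · intro k
      refine Fin.cases ?_ ?_ k
      · simpa using Nat.min_le_right a m
      · intro i; simpa using he i
    · rw [Fin.sum_cons, hs]; omega

lemma P_ne_zero (z : ℕ → ℂ) (p : ℕ) : P z p ≠ 0 := by
  unfold P
  rw [Finset.prod_ne_zero_iff]
  intro i _
  exact pow_ne_zero _ (X_sub_C_ne_zero (z i))

/-- For all natural numbers `p` and `n ≥ 1`, the `ℂ`-linear span in `ℂ(x)` of
all `n`-fold products `f₁·f₂⋯f_n` with each `f_k ∈ B_p` equals the subspace
`{ Q(x)/P_p(x)^n : Q ∈ ℂ[x], deg Q ≤ n·J(p) }`, and this subspace has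
dimension `n·J(p) + 1`. -/
theorem span_prodSet_eq (z : ℕ → ℂ) (hz : Function.Injective z) (p n : ℕ)
    (hn : 1 ≤ n) :
    Submodule.span ℂ (prodSet z p n) =
      Submodule.span ℂ {f : RatFunc ℂ | ∃ Q : Polynomial ℂ,
        Q.natDegree ≤ n * J p ∧
        f = algebraMap (Polynomial ℂ) (RatFunc ℂ) Q /
            algebraMap (Polynomial ℂ) (RatFunc ℂ) (P z p ^ n)} ∧
      Module.finrank ℂ (Submodule.span ℂ (prodSet z p n)) = n * J p + 1 := by
  classical
  set d : ℕ := n * J p with hd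
  set a : Polynomial ℂ →+* RatFunc ℂ := algebraMap (Polynomial ℂ) (RatFunc ℂ) with ha
  have haP : a (P z p) ≠ 0 := RatFunc.algebraMap_ne_zero (P_ne_zero z p)
  set c : RatFunc ℂ := (a (P z p ^ n))⁻¹ with hc
  have hcne : c ≠ 0 := inv_ne_zero (by rw [map_pow]; exact pow_ne_zero _ haP)
  -- the linear map Q ↦ a Q * c
  set L : Polynomial ℂ →ₗ[ℂ] RatFunc ℂ :=
    (LinearMap.mulRight ℂ c).comp
      (IsScalarTower.toAlgHom ℂ (Polynomial ℂ) (RatFunc ℂ)).toLinearMap with hLdef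
  have hL : ∀ Q : Polynomial ℂ, L Q = a Q / a (P z p ^ n) := by
    intro Q
    simp [hLdef, hc, div_eq_mul_inv, ha]
  have hLinj : Function.Injective L := by
    rw [← LinearMap.ker_eq_bot, LinearMap.ker_eq_bot']
    intro Q hQ
    have : a Q * c = 0 := by
      have := hL Q; rw [div_eq_mul_inv] at this; rw [← this, hQ]
    rcases mul_eq_zero.1 this with h | h
    · by_contra hQ0
      exact RatFunc.algebraMap_ne_zero hQ0 h
    · exact absurd h hcne
  -- the right-hand set is the image of degreeLE under L
  have hset : {f : RatFunc ℂ | ∃ Q : Polynomial ℂ,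
        Q.natDegree ≤ d ∧ f = a Q / a (P z p ^ n)} =
      L '' (degreeLE ℂ (d : ℕ) : Set (Polynomial ℂ)) := by
    ext f
    constructor
    · rintro ⟨Q, hQ, rfl⟩
      exact ⟨Q, by rwa [SetLike.mem_coe, mem_degreeLE, ← natDegree_le_iff_degree_le],
        hL Q⟩
    · rintro ⟨Q, hQ, rfl⟩
      rw [SetLike.mem_coe, mem_degreeLE, ← natDegree_le_iff_degree_le] at hQ
      exact ⟨Q, hQ, hL Q⟩
  have hspan_rhs : Submodule.span ℂ {f : RatFunc ℂ | ∃ Q : Polynomial ℂ,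
        Q.natDegree ≤ d ∧ f = a Q / a (P z p ^ n)} =
      Submodule.map L (degreeLE ℂ (d : ℕ)) := by
    rw [hset, Submodule.span_image, Submodule.span_eq]
  -- span of prodSet equals map L (degreeLE d)
  have hmain : Submodule.span ℂ (prodSet z p n) = Submodule.map L (degreeLE ℂ (d : ℕ)) := by
    apply le_antisymm
    · rw [Submodule.span_le]
      rintro f ⟨g, hg, rfl⟩
      choose Q hQdeg hQeq using hg
      have hprod : ∏ k, g k = L (∏ k, Q k) := by
        rw [hL, map_prod]
        have : ∀ k : Fin n, g k = a (Q k) / a (P z p) := hQeq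
        calc ∏ k, g k = ∏ k, a (Q k) / a (P z p) := by
              exact Finset.prod_congr rfl fun k _ => hQeq k
          _ = (∏ k, a (Q k)) / (a (P z p)) ^ n := by
              rw [Finset.prod_div_distrib, Finset.prod_const, Finset.card_univ,
                Fintype.card_fin]
          _ = (∏ k, a (Q k)) / a (P z p ^ n) := by rw [map_pow]
      rw [hprod]
      refine Submodule.mem_map_of_mem ?_
      rw [mem_degreeLE, ← natDegree_le_iff_degree_le]
      calc (∏ k, Q k).natDegree ≤ ∑ k, (Q k).natDegree := natDegree_prod_le _ _
        _ ≤ ∑ _k : Fin n, J p := Finset.sum_le_sum fun k _ => hQdeg k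
        _ = n * J p := by rw [Finset.sum_const, Finset.card_univ, Fintype.card_fin,
              smul_eq_mul]
    · rw [degreeLE_eq_span_X_pow, ← Submodule.span_image, Submodule.span_le]
      rintro f ⟨Q, hQ, rfl⟩
      simp only [Finset.coe_image, Set.mem_image, Finset.mem_coe, Finset.mem_range] at hQ
      obtain ⟨i, hi, rfl⟩ := hQ
      have hid : i ≤ d := Nat.lt_succ_iff.mp hi
      obtain ⟨e, he, hesum⟩ := exists_sum_decomp (J p) n i (by rwa [← hd])
      apply Submodule.subset_span
      refine ⟨fun k => a (X ^ (e k)) / a (P z p), fun k => ⟨X ^ (e k), ?_, rfl⟩, ?_⟩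
      · simpa [natDegree_X_pow] using he k
      · rw [hL]
        calc a (X ^ i) / a (P z p ^ n)
            = a (∏ k : Fin n, X ^ (e k)) / a (P z p ^ n) := by
              rw [Finset.prod_pow_eq_pow_sum, hesum]
          _ = (∏ k : Fin n, a (X ^ (e k))) / (a (P z p)) ^ n := by
              rw [map_prod, map_pow]
          _ = ∏ k : Fin n, a (X ^ (e k)) / a (P z p) := by
              rw [Finset.prod_div_distrib, Finset.prod_const, Finset.card_univ,
                Fintype.card_fin]
  constructor
  · rw [hmain, hspan_rhs]
  · rw [hmain]
    have h1 : Module.finrank ℂ (Submodule.map L (degreeLE ℂ (d : ℕ))) =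
        Module.finrank ℂ (degreeLE ℂ (d : ℕ)) :=
      (LinearEquiv.finrank_eq (Submodule.equivMapOfInjective L hLinj _)).symm
    rw [h1, ← degreeLT_succ_eq_degreeLE,
      LinearEquiv.finrank_eq (degreeLTEquiv ℂ (d + 1)), Module.finrank_fin_fun]
end

section
/- Every rational function f ∈ ℂ(x) can be written as a quotient f = g/h where, for some natural number n, both g and h lie in B_n and h ≠ 0; that is, the graded field of homogeneous quotients K^gr(B) of the algebra B = ⊕_n B_n is equal to ℂ(x). -/
open Polynomial

/-- Every rational function `f ∈ ℂ(x)` can be written as a quotient `f = g/h`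
where for some natural number `n` both `g` and `h` lie in `B_n` and `h ≠ 0`;
that is, the graded field of homogeneous quotients `K^gr(B)` of the algebra
`B = ⊕_n B_n` is equal to `ℂ(x)`. -/
theorem Kgr_eq_ratFunc (z : ℕ → ℂ) (hz : Function.Injective z)
    (f : RatFunc ℂ) :
    ∃ (n : ℕ) (g h : RatFunc ℂ), g ∈ B z n ∧ h ∈ B z n ∧ h ≠ 0 ∧ f = g / h := by
  classical
  set n := max f.num.natDegree f.denom.natDegree with hn
  have hJ : n ≤ J n := by
    have h0 : (0 : ℕ) ∈ Finset.range (n + 1) := Finset.mem_range.mpr (Nat.succ_pos n)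
    calc n = n / 2 ^ 0 := by simp
    _ ≤ J n := Finset.single_le_sum (f := fun i => n / 2 ^ i)
        (fun i _ => Nat.zero_le _) h0
  have hP : P z n ≠ 0 := by
    unfold P
    exact Finset.prod_ne_zero_iff.mpr fun i _ => pow_ne_zero _ (X_sub_C_ne_zero _)
  set A := algebraMap (Polynomial ℂ) (RatFunc ℂ) with hA
  have hPA : A (P z n) ≠ 0 := by
    simpa [hA] using (RatFunc.algebraMap_ne_zero hP)
  have hdA : A f.denom ≠ 0 := by
    simpa [hA] using (RatFunc.algebraMap_ne_zero (RatFunc.denom_ne_zero f))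
  refine ⟨n, A f.num / A (P z n), A f.denom / A (P z n),
    ⟨f.num, le_trans (le_max_left _ _) hJ, rfl⟩,
    ⟨f.denom, le_trans (le_max_right _ _) hJ, rfl⟩,
    div_ne_zero hdA hPA, ?_⟩
  rw [div_div_div_cancel_right₀]
  · exact (RatFunc.num_div_denom f).symm

  · exact hPA
end
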